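/- Let g : ℤ/Nℤ → ℂ, and define L*(1, g) := lim_{s→1} (L(s, g) − ĝ(0)/(N·(s−1))). Then L(0, ĝ) + ĝ(0)/2 = C_{N,1}^{−1}·(L*(1, g⁻) − L*(1, g)); moreover L(0, g + g⁻) = −g(0) and L(0, g − g⁻) = 2·L(0, g) + g(0). -/

import Mathlib

/-!
By the identity theorem on `ℂ ∖ {1}`, `L f` agrees with Mathlib's `ZMod.LFunction f` away from
`s = 1`; and since `g` and `g⁻` have the same residue there, `L*(1, g⁻) - L*(1, g)` is the value
`L(1, g⁻ - g)` of an entire L-function. The last two identities follow from linearity and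
`L(0, Φ) = -Φ(0)/2` for even `Φ`. For the first, the third identity applied to `ĝ` gives
`L(0, ĝ) + ĝ(0)/2 = L(0, ĝ - ĝ⁻)/2`, where `ĝ - ĝ⁻` is odd with Fourier transform `N (g⁻ - g)`;
the functional equation at `s = 1` reads `L(0, Φ) = (i/π) L(1, Φ̂)` for odd `Φ`.
-/

noncomputable section

open Filter Complex

/-- The additive character `x ↦ exp(2πi·x/N)` of `ℤ/Nℤ`. -/
def eChar (N : ℕ) [NeZero N] (x : ZMod N) : ℂ :=
  Complex.exp (2 * (Real.pi : ℂ) * Complex.I * (x.val : ℂ) / (N : ℂ))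

/-- The Fourier transform `ĝ(n) = Σ_{a ∈ ℤ/Nℤ} g(a)·exp(-2πi·a·n/N)` of a function on
`ℤ/Nℤ`. -/
def fhat (N : ℕ) [NeZero N] (g : ZMod N → ℂ) : ZMod N → ℂ :=
  fun n => ∑ a : ZMod N, g a * eChar N (-(a * n))

/-- The constant `C_{N,h} = (-2πi)^h/(N^h·(h-1)!)`. -/
def CN (N : ℕ) (h : ℕ) : ℂ :=
  (-(2 * (Real.pi : ℂ) * Complex.I)) ^ h / ((N : ℂ) ^ h * (Nat.factorial (h - 1) : ℂ))

/-- `L` is the meromorphically continued `L`-function of functions on `ℤ/Nℤ`: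
for each `g`, `L g` agrees with the (absolutely convergent) Dirichlet series
`Σ_{n ≥ 1} g(n mod N)·n^{-s}` on `Re(s) > 1`, is differentiable away from `s = 1`,
and has at most a simple pole at `s = 1` with residue `ĝ(0)/N`. -/
def IsLSeries (N : ℕ) [NeZero N] (L : (ZMod N → ℂ) → ℂ → ℂ) : Prop :=
  (∀ (g : ZMod N → ℂ) (s : ℂ), 1 < s.re →
      HasSum (fun n : ℕ => g ((n + 1 : ℕ) : ZMod N) * ((n + 1 : ℕ) : ℂ) ^ (-s)) (L g s)) ∧
  (∀ (g : ZMod N → ℂ) (s : ℂ), s ≠ 1 → DifferentiableAt ℂ (L g) s) ∧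
  (∀ g : ZMod N → ℂ,
      Tendsto (fun s : ℂ => (s - 1) * L g s) (nhdsWithin 1 {(1 : ℂ)}ᶜ)
        (nhds (fhat N g 0 / (N : ℂ))))

open ZMod Topology
open scoped Real

namespace ZMod

variable {N : ℕ} [NeZero N]

lemma LFunction_sub (Φ Ψ : ZMod N → ℂ) (s : ℂ) :
    LFunction (Φ - Ψ) s = LFunction Φ s - LFunction Ψ s := by
  simp only [LFunction, Pi.sub_apply, sub_mul, Finset.sum_sub_distrib, mul_sub]

lemma LFunction_neg (Φ : ZMod N → ℂ) (s : ℂ) : LFunction (-Φ) s = -LFunction Φ s := by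
  simp only [LFunction, Pi.neg_apply, neg_mul, Finset.sum_neg_distrib, mul_neg]

lemma LFunction_const_mul (a : ℂ) (Φ : ZMod N → ℂ) (s : ℂ) :
    LFunction (fun j ↦ a * Φ j) s = a * LFunction Φ s := by
  simp only [LFunction, mul_assoc, ← Finset.mul_sum, mul_left_comm _ a]

lemma LFunction_add_comp_neg_apply_zero (Φ : ZMod N → ℂ) :
    LFunction (fun x ↦ Φ x + Φ (-x)) 0 = -Φ 0 := by
  rw [LFunction_apply_zero_of_even fun x ↦ by rw [neg_neg, add_comm], neg_zero]
  ring

lemma LFunction_sub_comp_neg_apply_zero (Φ : ZMod N → ℂ) :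
    LFunction (fun x ↦ Φ x - Φ (-x)) 0 = 2 * LFunction Φ 0 + Φ 0 := by
  have h : (fun x ↦ Φ x - Φ (-x)) = (fun x ↦ 2 * Φ x) - fun x ↦ Φ x + Φ (-x) := by
    ext x; simp only [Pi.sub_apply]; ring
  rw [h, LFunction_sub, LFunction_const_mul, LFunction_add_comp_neg_apply_zero]
  ring

lemma LFunction_apply_zero_of_odd {Φ : ZMod N → ℂ} (hΦ : Φ.Odd) :
    LFunction Φ 0 = I / π * LFunction (𝓕 Φ) 1 := by
  have hs : ∀ n : ℕ, (1 : ℂ) ≠ -n := fun n h ↦ by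
    have := congrArg re h
    simp only [one_re, neg_re, natCast_re] at this
    linarith [n.cast_nonneg (α := ℝ)]
  have h := LFunction_one_sub Φ hs (Or.inl hΦ.map_zero)
  rw [show (fun x ↦ Φ (-x)) = -Φ from funext hΦ, map_neg, LFunction_neg, sub_self,
    cpow_zero, cpow_neg_one, Gamma_one, mul_one, show π * I * 1 / 2 = π / 2 * I by ring,
    show -π * I * 1 / 2 = -π / 2 * I by ring, exp_pi_div_two_mul_I, exp_neg_pi_div_two_mul_I] at h
  rw [h]
  field_simp
  ring

end ZMod

lemma eChar_eq_stdAddChar (N : ℕ) [NeZero N] (x : ZMod N) : eChar N x = stdAddChar x := by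
  have h := stdAddChar_coe (N := N) (x.val : ℤ)
  rw [Int.cast_natCast, natCast_zmod_val] at h
  rw [eChar, h]
  push_cast
  ring_nf

lemma fhat_eq_dft (N : ℕ) [NeZero N] (f : ZMod N → ℂ) : fhat N f = 𝓕 f := by
  ext n
  rw [dft_apply, fhat]
  exact Finset.sum_congr rfl fun a _ ↦ by rw [eChar_eq_stdAddChar, smul_eq_mul, mul_comm]

lemma CN_one_inv (N : ℕ) : (CN N 1)⁻¹ = N * I / (2 * π) := by
  rw [CN, pow_one, pow_one, Nat.sub_self, Nat.factorial_zero, Nat.cast_one, mul_one, inv_div,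
    div_neg, div_mul_eq_div_div, div_I]
  ring

namespace IsLSeries

variable {N : ℕ} [NeZero N] {L : (ZMod N → ℂ) → ℂ → ℂ}

lemma eq_LFunction_of_one_lt_re (hL : IsLSeries N L) (f : ZMod N → ℂ) {s : ℂ} (hs : 1 < s.re) :
    L f s = LFunction f s := by
  have h : HasSum (fun n : ℕ ↦ LSeries.term (f ·) s (n + 1)) (L f s) :=
    (hL.1 f s hs).congr_fun fun n ↦ by
      rw [LSeries.term_of_ne_zero n.succ_ne_zero, cpow_neg, div_eq_mul_inv]
  have h0 : HasSum (LSeries.term (f ·) s) (L f s) := by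
    simpa [LSeries.term_zero] using (hasSum_nat_add_iff 1).mp h
  rw [LFunction_eq_LSeries f hs, LSeries, h0.tsum_eq]

lemma eq_LFunction (hL : IsLSeries N L) (f : ZMod N → ℂ) {s : ℂ} (hs : s ≠ 1) :
    L f s = LFunction f s := by
  have hU : IsPreconnected ({1}ᶜ : Set ℂ) :=
    (isConnected_compl_singleton_of_one_lt_rank (by simp) 1).isPreconnected
  have hLan : AnalyticOnNhd ℂ (L f) {1}ᶜ :=
    DifferentiableOn.analyticOnNhd (fun u hu ↦ (hL.2.1 f u hu).differentiableWithinAt)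
      isOpen_compl_singleton
  have hLFan : AnalyticOnNhd ℂ (LFunction f) {1}ᶜ :=
    DifferentiableOn.analyticOnNhd
      (fun u hu ↦ (differentiableAt_LFunction f u (Or.inl hu)).differentiableWithinAt)
      isOpen_compl_singleton
  refine hLan.eqOn_of_preconnected_of_eventuallyEq hLFan hU (z₀ := 2) (by norm_num) ?_ hs
  have hre : re ⁻¹' Set.Ioi 1 ∈ 𝓝 (2 : ℂ) :=
    (continuous_re.isOpen_preimage _ isOpen_Ioi).mem_nhds (by simp)
  filter_upwards [hre] with z hz using hL.eq_LFunction_of_one_lt_re f hz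

lemma sub_eq_LFunction_one (hL : IsLSeries N L) {f f' : ZMod N → ℂ} {a a' : ℂ}
    (hff' : fhat N f 0 = fhat N f' 0)
    (ha : Tendsto (fun s ↦ L f s - fhat N f 0 / (N * (s - 1))) (𝓝[≠] 1) (𝓝 a))
    (ha' : Tendsto (fun s ↦ L f' s - fhat N f' 0 / (N * (s - 1))) (𝓝[≠] 1) (𝓝 a')) :
    a' - a = LFunction (fun x ↦ f' x - f x) 1 := by
  have hsum : ∑ x, (f' x - f x) = 0 := by
    rw [Finset.sum_sub_distrib, ← dft_apply_zero, ← dft_apply_zero, ← fhat_eq_dft,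
      ← fhat_eq_dft, hff', sub_self]
  have heq : (fun s ↦ (L f' s - fhat N f' 0 / (N * (s - 1)))
        - (L f s - fhat N f 0 / (N * (s - 1)))) =ᶠ[𝓝[≠] 1] LFunction (fun x ↦ f' x - f x) := by
    filter_upwards [self_mem_nhdsWithin] with s hs
    rw [hff', sub_sub_sub_cancel_right, hL.eq_LFunction f hs, hL.eq_LFunction f' hs,
      ← LFunction_sub]
    rfl
  refine tendsto_nhds_unique ((ha'.sub ha).congr' heq) ?_
  exact (differentiableAt_LFunction _ 1 (Or.inr hsum)).continuousAt.tendsto.mono_left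
    nhdsWithin_le_nhds

end IsLSeries

/-- Let `g : ℤ/Nℤ → ℂ` and let
`L*(1, f) := lim_{s→1} (L(s, f) - f̂(0)/(N·(s-1)))`.  Then
`L(0, ĝ) + ĝ(0)/2 = C_{N,1}⁻¹·(L*(1, g⁻) - L*(1, g))`; moreover
`L(0, g + g⁻) = -g(0)` and `L(0, g - g⁻) = 2·L(0, g) + g(0)`. -/
theorem statement18 (N : ℕ) [NeZero N] (g : ZMod N → ℂ)
    (L : (ZMod N → ℂ) → ℂ → ℂ) (hL : IsLSeries N L)
    (Lstar : (ZMod N → ℂ) → ℂ)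
    (hLstar : ∀ f : ZMod N → ℂ,
      Tendsto (fun s : ℂ => L f s - fhat N f 0 / ((N : ℂ) * (s - 1)))
        (nhdsWithin 1 {(1 : ℂ)}ᶜ) (nhds (Lstar f))) :
    L (fhat N g) 0 + fhat N g 0 / 2 =
      (CN N 1)⁻¹ * (Lstar (fun x => g (-x)) - Lstar g) ∧
    L (fun x => g x + g (-x)) 0 = -g 0 ∧
    L (fun x => g x - g (-x)) 0 = 2 * L g 0 + g 0 := by
  have hL0 (f : ZMod N → ℂ) : L f 0 = LFunction f 0 := hL.eq_LFunction f zero_ne_one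
  refine ⟨?_, by rw [hL0, LFunction_add_comp_neg_apply_zero],
    by rw [hL0, hL0, LFunction_sub_comp_neg_apply_zero]⟩
  have hodd : Function.Odd fun x ↦ 𝓕 g x - 𝓕 g (-x) := fun x ↦ by
    simp only [neg_neg, neg_sub]
  have hdft : 𝓕 (fun x ↦ 𝓕 g x - 𝓕 g (-x)) = fun x ↦ N * (g (-x) - g x) := by
    rw [show (fun x ↦ 𝓕 g x - 𝓕 g (-x)) = 𝓕 (g - fun x ↦ g (-x)) by
      rw [map_sub, dft_comp_neg]; rfl, dft_dft]
    ext x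
    rw [Pi.sub_apply, neg_neg, smul_eq_mul, mul_sub]
  have hstar : Lstar (fun x ↦ g (-x)) - Lstar g = LFunction (fun x ↦ g (-x) - g x) 1 :=
    hL.sub_eq_LFunction_one (by simp only [fhat_eq_dft, dft_comp_neg, neg_zero])
      (hLstar g) (hLstar _)
  calc L (fhat N g) 0 + fhat N g 0 / 2
      = LFunction (fun x ↦ 𝓕 g x - 𝓕 g (-x)) 0 / 2 := by
        rw [hL0, LFunction_sub_comp_neg_apply_zero, fhat_eq_dft]
        ring
    _ = I / π * (N * LFunction (fun x ↦ g (-x) - g x) 1) / 2 := by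
        rw [LFunction_apply_zero_of_odd hodd, hdft, LFunction_const_mul]
    _ = (CN N 1)⁻¹ * (Lstar (fun x => g (-x)) - Lstar g) := by
        rw [hstar, CN_one_inv]
        ring
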